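/- arXiv:0803.2258 — 5 statements merged into one kernel-verified Lean document; each statement's English description precedes it below -/
import Mathlib

section
/- (Lagrange–Jacobi identity) Along any solution of the Newtonian N-body problem on an interval J, the moment of inertia I(t) = (1/2) Σ_j m_j ‖r_j(t)‖² is twice differentiable and satisfies Ï(t) = 2 T(t) − U(t) for all t ∈ J. -/
/-!
Differentiating twice, `Ï = ∑ m_j ‖v_j‖² + ∑ ⟪r_j, m_j a_j⟫`. By Newton's equations the second
sum is the virial `∑ ⟪r_j, F_j⟫` of the gravitational forces. Pairing its `(j, k)` and `(k, j)`
terms and using `⟪r_j, r_k - r_j⟫ + ⟪r_k, r_j - r_k⟫ = -‖r_j - r_k‖²` turns each pair into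
`-G m_j m_k / ‖r_j - r_k‖`, so the virial is `-U` (Euler's identity for a potential that is
homogeneous of degree `-1`).
-/

open Finset
open scoped RealInnerProductSpace

theorem Finset.sum_sum_erase_eq_sum_sum_filter_lt_add_swap {ι M : Type*} [Fintype ι]
    [LinearOrder ι] [AddCommMonoid M] (f : ι → ι → M) :
    ∑ j, ∑ k ∈ univ.erase j, f j k = ∑ j, ∑ k ∈ univ.filter (fun k => j < k), (f j k + f k j) := by
  have hsplit : ∀ j, ∑ k ∈ univ.erase j, f j k
      = ∑ k ∈ univ.filter (fun k => j < k), f j k + ∑ k ∈ univ.filter (fun k => k < j), f j k := by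
    intro j
    rw [← sum_filter_add_sum_filter_not (univ.erase j) (fun k => j < k)]
    congr 2 <;> ext k <;> simp only [mem_filter, mem_erase, mem_univ] <;> grind
  simp only [hsplit, sum_add_distrib]
  congr 1
  exact sum_comm' (by simp)

theorem inner_add_inner_sub_swap {E : Type*} [NormedAddCommGroup E] [InnerProductSpace ℝ E]
    (x y : E) : ⟪x, y - x⟫ + ⟪y, x - y⟫ = -‖x - y‖ ^ 2 := by
  rw [← real_inner_self_eq_norm_sq]
  simp only [inner_sub_left, inner_sub_right, real_inner_comm x y]
  ring

noncomputable section

namespace NBody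

variable {ι E : Type*} [Fintype ι] [NormedAddCommGroup E] [InnerProductSpace ℝ E]
  (m : ι → ℝ) (G : ℝ)

def gravitationalForce [DecidableEq ι] (x : ι → E) (j : ι) : E :=
  ∑ k ∈ univ.erase j, (G * m j * m k / ‖x k - x j‖ ^ 3) • (x k - x j)

def gravitationalPotential [LinearOrder ι] (x : ι → E) : ℝ :=
  ∑ j, ∑ k ∈ univ.filter (fun k => j < k), G * m j * m k / ‖x j - x k‖

theorem sum_inner_gravitationalForce [LinearOrder ι] (x : ι → E) :
    ∑ j, ⟪x j, gravitationalForce m G x j⟫ = -gravitationalPotential m G x := by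
  simp only [gravitationalForce, inner_sum, real_inner_smul_right]
  rw [sum_sum_erase_eq_sum_sum_filter_lt_add_swap, gravitationalPotential, ← sum_neg_distrib]
  refine sum_congr rfl fun j _ => ?_
  rw [← sum_neg_distrib]
  refine sum_congr rfl fun k _ => ?_
  have hpair := inner_add_inner_sub_swap (x j) (x k)
  rw [norm_sub_rev (x k) (x j)]
  -- At `x j = x k` both sides vanish, since division by `0` gives `0`.
  rcases eq_or_ne ‖x j - x k‖ 0 with hd | hd
  · simp [hd]
  · field_simp
    linear_combination G * m j * m k * hpair

variable {m} {r v a : ι → ℝ → E} {s : Set ℝ} {t : ℝ}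

theorem hasDerivWithinAt_half_sum_mul_norm_sq (hr : ∀ j, HasDerivWithinAt (r j) (v j t) s t) :
    HasDerivWithinAt (fun t => 1 / 2 * ∑ j, m j * ‖r j t‖ ^ 2)
      (∑ j, m j * ⟪r j t, v j t⟫) s t := by
  refine ((HasDerivWithinAt.fun_sum fun j _ => (hr j).norm_sq.const_mul (m j)).const_mul
    (1 / 2 : ℝ)).congr_deriv ?_
  rw [mul_sum]
  exact sum_congr rfl fun j _ => by ring

theorem hasDerivWithinAt_sum_mul_inner (hr : ∀ j, HasDerivWithinAt (r j) (v j t) s t)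
    (hv : ∀ j, HasDerivWithinAt (v j) (a j t) s t) :
    HasDerivWithinAt (fun t => ∑ j, m j * ⟪r j t, v j t⟫)
      (∑ j, m j * ‖v j t‖ ^ 2 + ∑ j, m j * ⟪r j t, a j t⟫) s t := by
  refine (HasDerivWithinAt.fun_sum fun j _ =>
    ((hr j).inner ℝ (hv j)).const_mul (m j)).congr_deriv ?_
  rw [← sum_add_distrib]
  exact sum_congr rfl fun j _ => by rw [real_inner_self_eq_norm_sq]; ring

end NBody

end

open NBody in
theorem lagrange_jacobi_identity_general (N : ℕ) (m : Fin N → ℝ)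
    (G : ℝ) (J : Set ℝ)
    (r v a : Fin N → ℝ → EuclideanSpace ℝ (Fin 3))
    (hrv : ∀ j, ∀ t ∈ J, HasDerivWithinAt (r j) (v j t) J t)
    (hva : ∀ j, ∀ t ∈ J, HasDerivWithinAt (v j) (a j t) J t)
    (hNewton : ∀ j, ∀ t ∈ J,
      m j • a j t = ∑ k ∈ Finset.univ.erase j,
        (G * m j * m k / ‖r k t - r j t‖ ^ 3) • (r k t - r j t))
    (T U I : ℝ → ℝ)
    (hT : ∀ t, T t = (1 / 2) * ∑ j, m j * ‖v j t‖ ^ 2)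
    (hU : ∀ t, U t = ∑ j, ∑ k ∈ Finset.univ.filter (fun k => j < k),
        G * m j * m k / ‖r j t - r k t‖)
    (hI : ∀ t, I t = (1 / 2) * ∑ j, m j * ‖r j t‖ ^ 2) :
    ∃ I' : ℝ → ℝ, (∀ t ∈ J, HasDerivWithinAt I (I' t) J t) ∧
      (∀ t ∈ J, HasDerivWithinAt I' (2 * T t - U t) J t) := by
  refine ⟨fun t => ∑ j, m j * ⟪r j t, v j t⟫, fun t ht => ?_, fun t ht => ?_⟩
  · rw [funext hI]
    exact hasDerivWithinAt_half_sum_mul_norm_sq fun j => hrv j t ht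
  · have hvirial : ∑ j, m j * ⟪r j t, a j t⟫ = -U t := by
      have hforce : ∀ j, m j • a j t = gravitationalForce m G (r · t) j := fun j => hNewton j t ht
      simp only [← real_inner_smul_right, hforce]
      rw [hU]
      exact sum_inner_gravitationalForce m G (r · t)
    refine (hasDerivWithinAt_sum_mul_inner (fun j => hrv j t ht) (fun j => hva j t ht)).congr_deriv ?_
    rw [hvirial, hT]
    ring

/-- **Lagrange–Jacobi identity.** Along any solution of the Newtonian N-body
problem on an interval `J`, the moment of inertia
`I(t) = (1/2) ∑ j, m j ‖r j t‖²` is twice differentiable and satisfies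
`Ï(t) = 2 T(t) - U(t)` for all `t ∈ J`. -/
theorem lagrange_jacobi_identity (N : ℕ) (m : Fin N → ℝ) (hm : ∀ j, 0 < m j)
    (G : ℝ) (hG : 0 < G) (J : Set ℝ) (hJ : Convex ℝ J)
    (r v a : Fin N → ℝ → EuclideanSpace ℝ (Fin 3))
    (hrv : ∀ j, ∀ t ∈ J, HasDerivWithinAt (r j) (v j t) J t)
    (hva : ∀ j, ∀ t ∈ J, HasDerivWithinAt (v j) (a j t) J t)
    (hacont : ∀ j, ContinuousOn (a j) J)
    (hsep : ∀ t ∈ J, ∀ j k, j ≠ k → r j t ≠ r k t)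
    (hNewton : ∀ j, ∀ t ∈ J,
      m j • a j t = ∑ k ∈ Finset.univ.erase j,
        (G * m j * m k / ‖r k t - r j t‖ ^ 3) • (r k t - r j t))
    (T U I : ℝ → ℝ)
    (hT : ∀ t, T t = (1 / 2) * ∑ j, m j * ‖v j t‖ ^ 2)
    (hU : ∀ t, U t = ∑ j, ∑ k ∈ Finset.univ.filter (fun k => j < k),
        G * m j * m k / ‖r j t - r k t‖)
    (hI : ∀ t, I t = (1 / 2) * ∑ j, m j * ‖r j t‖ ^ 2) :
    ∃ I' : ℝ → ℝ, (∀ t ∈ J, HasDerivWithinAt I (I' t) J t) ∧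
      (∀ t ∈ J, HasDerivWithinAt I' (2 * T t - U t) J t) :=
  lagrange_jacobi_identity_general N m G J r v a hrv hva hNewton T U I hT hU hI
end

section
/- (Lagrange–Jacobi identity, energy form) Along any solution of the Newtonian N-body problem on an interval J with (constant) total energy h = T(t) − U(t), the moment of inertia satisfies Ï(t) = T(t) + h = U(t) + 2h for all t ∈ J. -/
/-!
Differentiating `I` twice gives `Ï = Σ mⱼ ‖vⱼ‖² + Σ ⟪rⱼ, mⱼ aⱼ⟫ = 2T + Σ ⟪rⱼ, Fⱼ⟫`. Pairing the
force terms of `j` on `k` and of `k` on `j` turns the virial `Σ ⟪rⱼ, Fⱼ⟫` into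
`-Σ_{j<k} cⱼₖ ‖rⱼ - rₖ‖²`, which for Newton's coefficients `cⱼₖ = G mⱼ mₖ / ‖rⱼ - rₖ‖³` is `-U`
(Euler's relation for a potential homogeneous of degree `-1`). Hence `Ï = 2T - U = T + h = U + 2h`.
-/

open Finset
open scoped RealInnerProductSpace

theorem Finset.sum_sum_erase_eq_sum_sum_lt {ι M : Type*} [Fintype ι] [LinearOrder ι]
    [AddCommMonoid M] (f : ι → ι → M) :
    ∑ j, ∑ k ∈ univ.erase j, f j k = ∑ j, ∑ k ∈ univ with j < k, (f j k + f k j) := by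
  have hsplit : ∀ j, ∑ k ∈ univ.erase j, f j k
      = ∑ k ∈ univ with j < k, f j k + ∑ k ∈ univ with k < j, f j k := fun j => by
    rw [← sum_union (disjoint_filter.2 fun k _ h => lt_asymm h)]
    congr 1
    ext k
    simp [eq_comm]
  have hswap : ∑ j, ∑ k ∈ univ with k < j, f j k = ∑ j, ∑ k ∈ univ with j < k, f k j :=
    sum_comm' fun j k => by simp
  simp_rw [hsplit, sum_add_distrib, hswap]

section
variable {ι E : Type*} [Fintype ι] [LinearOrder ι] [NormedAddCommGroup E] [InnerProductSpace ℝ E]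

theorem sum_inner_sum_erase_smul_sub (x : ι → E) (c : ι → ι → ℝ)
    (hc : ∀ j k, c j k = c k j) :
    ∑ j, ⟪x j, ∑ k ∈ univ.erase j, c j k • (x k - x j)⟫
      = -∑ j, ∑ k ∈ univ with j < k, c j k * ‖x j - x k‖ ^ 2 := by
  simp_rw [inner_sum, real_inner_smul_right, sum_sum_erase_eq_sum_sum_lt, ← sum_neg_distrib]
  refine sum_congr rfl fun j _ => sum_congr rfl fun k _ => ?_
  rw [hc k j, ← real_inner_self_eq_norm_sq]
  simp only [inner_sub_left, inner_sub_right, real_inner_comm (x j) (x k)]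
  ring

theorem sum_inner_newton_force (x : ι → E) (μ : ι → ℝ) (G : ℝ) :
    ∑ j, ⟪x j, ∑ k ∈ univ.erase j, (G * μ j * μ k / ‖x k - x j‖ ^ 3) • (x k - x j)⟫
      = -∑ j, ∑ k ∈ univ with j < k, G * μ j * μ k / ‖x j - x k‖ := by
  rw [sum_inner_sum_erase_smul_sub]
  · congr! 3 with j - k -
    rw [norm_sub_rev]
    -- at a collision both sides are `0` because of `x / 0 = 0`
    rcases eq_or_ne ‖x j - x k‖ 0 with h | h
    · simp [h]
    · field_simp
  · intro j k
    rw [norm_sub_rev]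
    ring

end

theorem HasDerivWithinAt.half_sum_mul_norm_sq {ι F : Type*} [Fintype ι] [NormedAddCommGroup F]
    [InnerProductSpace ℝ F] (m : ι → ℝ) {x : ι → ℝ → F} {v : ι → F} {s : Set ℝ} {t : ℝ}
    (hx : ∀ j, HasDerivWithinAt (x j) (v j) s t) :
    HasDerivWithinAt (fun τ => (1 / 2) * ∑ j, m j * ‖x j τ‖ ^ 2) (∑ j, m j * ⟪x j t, v j⟫) s t := by
  refine ((HasDerivWithinAt.fun_sum fun j _ => ((hx j).norm_sq).const_mul (m j)).const_mul
    (1 / 2)).congr_deriv ?_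
  rw [mul_sum]
  exact sum_congr rfl fun j _ => by ring

theorem Convex.hasDerivWithinAt_of_common_primitive {F : Type*} [NormedAddCommGroup F]
    [NormedSpace ℝ F] {s : Set ℝ} (hs : Convex ℝ s) {f f₁ f₂ : ℝ → F} {x : ℝ} {g : F}
    (h₁ : ∀ y ∈ s, HasDerivWithinAt f (f₁ y) s y) (h₂ : ∀ y ∈ s, HasDerivWithinAt f (f₂ y) s y)
    (hx : x ∈ s) (hg : HasDerivWithinAt f₁ g s x) : HasDerivWithinAt f₂ g s x := by
  rcases s.subsingleton_or_nontrivial with hsub | hnt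
  · exact hasDerivWithinAt_iff_hasFDerivWithinAt.2 (.of_subsingleton hsub)
  have hu : UniqueDiffOn ℝ s := uniqueDiffOn_convex hs (hs.nontrivial_iff_nonempty_interior.1 hnt)
  have heq : ∀ y ∈ s, f₁ y = f₂ y := fun y hy =>
    ((h₁ y hy).derivWithin (hu y hy)).symm.trans ((h₂ y hy).derivWithin (hu y hy))
  exact hg.congr (fun y hy => (heq y hy).symm) (heq x hx).symm

theorem lagrange_jacobi_energy_form_general (N : ℕ) (m : Fin N → ℝ)
    (G : ℝ) (J : Set ℝ) (hJ : Convex ℝ J)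
    (r v a : Fin N → ℝ → EuclideanSpace ℝ (Fin 3))
    (hrv : ∀ j, ∀ t ∈ J, HasDerivWithinAt (r j) (v j t) J t)
    (hva : ∀ j, ∀ t ∈ J, HasDerivWithinAt (v j) (a j t) J t)
    (hNewton : ∀ j, ∀ t ∈ J,
      m j • a j t = ∑ k ∈ Finset.univ.erase j,
        (G * m j * m k / ‖r k t - r j t‖ ^ 3) • (r k t - r j t))
    (T U I : ℝ → ℝ)
    (hT : ∀ t, T t = (1 / 2) * ∑ j, m j * ‖v j t‖ ^ 2)
    (hU : ∀ t, U t = ∑ j, ∑ k ∈ Finset.univ.filter (fun k => j < k),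
        G * m j * m k / ‖r j t - r k t‖)
    (hI : ∀ t, I t = (1 / 2) * ∑ j, m j * ‖r j t‖ ^ 2)
    (h : ℝ) (hh : ∀ t ∈ J, T t - U t = h)
    (I' : ℝ → ℝ) (hI' : ∀ t ∈ J, HasDerivWithinAt I (I' t) J t) :
    ∀ t ∈ J, HasDerivWithinAt I' (T t + h) J t ∧
      HasDerivWithinAt I' (U t + 2 * h) J t := by
  intro t ht
  have hI₁ : ∀ s ∈ J, HasDerivWithinAt I (∑ j, m j * ⟪r j s, v j s⟫) J s := fun s hs => by
    simpa only [← funext hI] using HasDerivWithinAt.half_sum_mul_norm_sq m fun j => hrv j s hs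
  have hvirial : ∑ j, m j * (⟪r j t, a j t⟫ + ⟪v j t, v j t⟫) = 2 * T t - U t := by
    simp only [mul_add, sum_add_distrib, real_inner_self_eq_norm_sq, ← real_inner_smul_right,
      hNewton _ t ht, sum_inner_newton_force, hT, hU]
    ring
  have hI₂ : HasDerivWithinAt (fun s => ∑ j, m j * ⟪r j s, v j s⟫) (2 * T t - U t) J t :=
    hvirial ▸ HasDerivWithinAt.fun_sum fun j _ => ((hrv j t ht).inner ℝ (hva j t ht)).const_mul _
  have hI'' := hJ.hasDerivWithinAt_of_common_primitive hI₁ hI' ht hI₂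
  exact ⟨hI''.congr_deriv (by linarith [hh t ht]), hI''.congr_deriv (by linarith [hh t ht])⟩

/-- **Lagrange–Jacobi identity, energy form.** Along any solution of the
Newtonian N-body problem on an interval `J` with constant total energy
`h = T - U`, the moment of inertia satisfies `Ï = T + h = U + 2h` on `J`. -/
theorem lagrange_jacobi_energy_form (N : ℕ) (m : Fin N → ℝ) (hm : ∀ j, 0 < m j)
    (G : ℝ) (hG : 0 < G) (J : Set ℝ) (hJ : Convex ℝ J)
    (r v a : Fin N → ℝ → EuclideanSpace ℝ (Fin 3))
    (hrv : ∀ j, ∀ t ∈ J, HasDerivWithinAt (r j) (v j t) J t)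
    (hva : ∀ j, ∀ t ∈ J, HasDerivWithinAt (v j) (a j t) J t)
    (hacont : ∀ j, ContinuousOn (a j) J)
    (hsep : ∀ t ∈ J, ∀ j k, j ≠ k → r j t ≠ r k t)
    (hNewton : ∀ j, ∀ t ∈ J,
      m j • a j t = ∑ k ∈ Finset.univ.erase j,
        (G * m j * m k / ‖r k t - r j t‖ ^ 3) • (r k t - r j t))
    (T U I : ℝ → ℝ)
    (hT : ∀ t, T t = (1 / 2) * ∑ j, m j * ‖v j t‖ ^ 2)
    (hU : ∀ t, U t = ∑ j, ∑ k ∈ Finset.univ.filter (fun k => j < k),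
        G * m j * m k / ‖r j t - r k t‖)
    (hI : ∀ t, I t = (1 / 2) * ∑ j, m j * ‖r j t‖ ^ 2)
    (h : ℝ) (hh : ∀ t ∈ J, T t - U t = h)
    (I' : ℝ → ℝ) (hI' : ∀ t ∈ J, HasDerivWithinAt I (I' t) J t) :
    ∀ t ∈ J, HasDerivWithinAt I' (T t + h) J t ∧
      HasDerivWithinAt I' (U t + 2 * h) J t :=
  lagrange_jacobi_energy_form_general N m G J hJ r v a hrv hva hNewton T U I hT hU hI h hh I' hI'
end

section
/- For any masses m_1, …, m_N > 0 and any vectors r_1, …, r_N, v_1, …, v_N ∈ ℝ³, one has ‖Σ_j m_j (r_j × v_j)‖² ≤ 4 I T, where I = (1/2) Σ_j m_j ‖r_j‖², T = (1/2) Σ_j m_j ‖v_j‖², and × is the cross product in ℝ³. -/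
/-! The angular momentum is a weighted sum of cross products, each of norm at most `‖r‖ ‖v‖`;
the triangle inequality followed by the Cauchy–Schwarz inequality with weights `m j` bounds its
square by `(∑ m ‖r‖²) (∑ m ‖v‖²) = 4 I T`. -/

noncomputable def cross (u v : EuclideanSpace ℝ (Fin 3)) : EuclideanSpace ℝ (Fin 3) :=
  (WithLp.equiv 2 (Fin 3 → ℝ)).symm
    (crossProduct ((WithLp.equiv 2 (Fin 3 → ℝ)) u) ((WithLp.equiv 2 (Fin 3 → ℝ)) v))

open Finset

lemma norm_cross_le (u v : EuclideanSpace ℝ (Fin 3)) : ‖cross u v‖ ≤ ‖u‖ * ‖v‖ :=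
  (InnerProductGeometry.norm_ofLp_crossProduct u v).trans_le <|
    mul_le_of_le_one_right (by positivity) (Real.sin_le_one _)

lemma sq_norm_sum_smul_le_of_norm_le_mul {ι E : Type*} [SeminormedAddCommGroup E]
    [NormedSpace ℝ E] (s : Finset ι) {m a b : ι → ℝ} {x : ι → E} (hm : ∀ i ∈ s, 0 ≤ m i)
    (hx : ∀ i ∈ s, ‖x i‖ ≤ a i * b i) :
    ‖∑ i ∈ s, m i • x i‖ ^ 2 ≤ (∑ i ∈ s, m i * a i ^ 2) * ∑ i ∈ s, m i * b i ^ 2 := by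
  have triangle : ‖∑ i ∈ s, m i • x i‖ ≤ ∑ i ∈ s, m i * ‖x i‖ := by
    refine (norm_sum_le _ _).trans_eq (sum_congr rfl fun i hi => ?_)
    rw [norm_smul, Real.norm_of_nonneg (hm i hi)]
  calc ‖∑ i ∈ s, m i • x i‖ ^ 2 ≤ (∑ i ∈ s, m i * ‖x i‖) ^ 2 := by gcongr
    _ ≤ (∑ i ∈ s, m i * a i ^ 2) * ∑ i ∈ s, m i * b i ^ 2 := by
      refine sum_sq_le_sum_mul_sum_of_sq_le_mul s (fun i hi => mul_nonneg (hm i hi) (sq_nonneg _))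
        (fun i hi => mul_nonneg (hm i hi) (sq_nonneg _)) fun i hi => ?_
      calc (m i * ‖x i‖) ^ 2 = m i ^ 2 * ‖x i‖ ^ 2 := by ring
        _ ≤ m i ^ 2 * (a i * b i) ^ 2 := by gcongr; exact hx i hi
        _ = m i * a i ^ 2 * (m i * b i ^ 2) := by ring

/-- **Sundman's pointwise inequality.** For any masses, positions and
velocities, `‖∑ j, m j • (r j × v j)‖² ≤ 4 I T`, where `I` is the moment of
inertia and `T` the kinetic energy. -/
theorem sundman_pointwise_inequality (N : ℕ) (m : Fin N → ℝ) (hm : ∀ j, 0 < m j)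
    (r v : Fin N → EuclideanSpace ℝ (Fin 3)) :
    ‖∑ j, m j • cross (r j) (v j)‖ ^ 2
      ≤ 4 * ((1 / 2) * ∑ j, m j * ‖r j‖ ^ 2) * ((1 / 2) * ∑ j, m j * ‖v j‖ ^ 2) := by
  calc ‖∑ j, m j • cross (r j) (v j)‖ ^ 2
      ≤ (∑ j, m j * ‖r j‖ ^ 2) * ∑ j, m j * ‖v j‖ ^ 2 :=
        sq_norm_sum_smul_le_of_norm_le_mul _ (fun j _ => (hm j).le)
          (fun j _ => norm_cross_le (r j) (v j))
    _ = 4 * ((1 / 2) * ∑ j, m j * ‖r j‖ ^ 2) * ((1 / 2) * ∑ j, m j * ‖v j‖ ^ 2) := by ring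
end

section
/- Let f : [t₁, t₂] → ℝ be twice differentiable with f(t) > 0 and f'(t) < 0 for all t ∈ [t₁, t₂], and suppose that for some constants C ≥ 0 and h ∈ ℝ one has f''(t) ≥ C/(4 f(t)) + h for all t ∈ [t₁, t₂]. Then (C/4) · ln(f(t₁)/f(t₂)) ≤ h · (f(t₂) − f(t₁)) + (1/2)(f'(t₁)² − f'(t₂)²). -/
/-- The key integral estimate in Sundman's total collapse theorem: if `f > 0`,
`f' < 0` and `f'' ≥ C/(4f) + h` on `[t₁, t₂]` with `C ≥ 0`, then
`(C/4) ln(f t₁ / f t₂) ≤ h (f t₂ - f t₁) + (1/2)((f' t₁)² - (f' t₂)²)`. -/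
theorem sundman_integral_estimate (t₁ t₂ : ℝ) (h12 : t₁ < t₂)
    (f f' f'' : ℝ → ℝ)
    (hf' : ∀ t ∈ Set.Icc t₁ t₂, HasDerivWithinAt f (f' t) (Set.Icc t₁ t₂) t)
    (hf'' : ∀ t ∈ Set.Icc t₁ t₂, HasDerivWithinAt f' (f'' t) (Set.Icc t₁ t₂) t)
    (C h : ℝ) (hC : 0 ≤ C)
    (hfpos : ∀ t ∈ Set.Icc t₁ t₂, 0 < f t)
    (hf'neg : ∀ t ∈ Set.Icc t₁ t₂, f' t < 0)
    (hineq : ∀ t ∈ Set.Icc t₁ t₂, C / (4 * f t) + h ≤ f'' t) :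
    C / 4 * Real.log (f t₁ / f t₂)
      ≤ h * (f t₂ - f t₁) + 1 / 2 * (f' t₁ ^ 2 - f' t₂ ^ 2) := by
  set G : ℝ → ℝ := fun t => h * f t - 1 / 2 * f' t ^ 2 + C / 4 * Real.log (f t) with hG
  set G' : ℝ → ℝ := fun t => h * f' t - f' t * f'' t + C / 4 * (f' t / f t) with hG'
  have hGderiv : ∀ t ∈ Set.Icc t₁ t₂, HasDerivWithinAt G (G' t) (Set.Icc t₁ t₂) t := by
    intro t ht
    have h1 := hf' t ht
    have h2 := hf'' t ht
    have hfne : f t ≠ 0 := (hfpos t ht).ne'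
    have hlog : HasDerivWithinAt (fun t => Real.log (f t)) (f' t / f t) (Set.Icc t₁ t₂) t := by
      simpa [div_eq_inv_mul, mul_comm] using h1.log hfne
    have : HasDerivWithinAt (fun t => h * f t - 1 / 2 * f' t ^ 2 + C / 4 * Real.log (f t))
        (h * f' t - 1 / 2 * (2 * f' t ^ 1 * f'' t) + C / 4 * (f' t / f t))
        (Set.Icc t₁ t₂) t :=
      (((h1.const_mul h).sub ((h2.pow 2).const_mul (1/2 : ℝ))).add (hlog.const_mul (C/4)))
    convert this using 1
    ring
  have hmono : MonotoneOn G (Set.Icc t₁ t₂) := by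
    apply monotoneOn_of_hasDerivWithinAt_nonneg (convex_Icc t₁ t₂)
      (fun t ht => (hGderiv t ht).continuousWithinAt)
      (f' := G')
      (fun t ht => (hGderiv t (interior_subset ht)).mono interior_subset)
    intro t ht
    have ht' : t ∈ Set.Icc t₁ t₂ := interior_subset ht
    have h1 := hineq t ht'
    have h2 := hf'neg t ht'
    have h3 := hfpos t ht'
    have key : C / 4 * (f' t / f t) = f' t * (C / (4 * f t)) := by
      field_simp
    simp only [hG', key]
    nlinarith [mul_nonneg (le_of_lt (neg_pos.mpr h2)) (sub_nonneg.mpr h1)]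
  have ht1 : t₁ ∈ Set.Icc t₁ t₂ := Set.left_mem_Icc.mpr h12.le
  have ht2 : t₂ ∈ Set.Icc t₁ t₂ := Set.right_mem_Icc.mpr h12.le
  have := hmono ht1 ht2 h12.le
  have hlogdiv : Real.log (f t₁ / f t₂) = Real.log (f t₁) - Real.log (f t₂) :=
    Real.log_div (hfpos t₁ ht1).ne' (hfpos t₂ ht2).ne'
  simp only [hG] at this
  rw [hlogdiv]
  nlinarith [this]
end

section
/- Let f : [a, b) → ℝ (b finite) be twice differentiable with f(t) > 0 for all t, f(t) → 0 as t → b⁻, and f''(t) → +∞ as t → b⁻. If C ≥ 0 is a constant with C ≤ 4 f(t) (f''(t) − h) for all t ∈ [a, b) and some constant h ∈ ℝ, then C = 0. -/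
/-!
Near `b` we have `f'' > 0`, so `f'` increases; since `f > 0` and `f → 0`, this forces `f' ≤ 0`
there. Multiplying `f'' - h ≥ C / (4 f)` by `f' ≤ 0` shows that the energy
`f'² / 2 - (C / 4) log f - h f` is nonincreasing near `b`. If `C > 0`, the term `-(C / 4) log f`
drives the energy to `+∞` as `t → b⁻`, which is impossible for a nonincreasing function.
-/

open Set Filter Topology Real

theorem monotoneOn_of_forall_hasDerivWithinAt_nonneg {D : Set ℝ} (hD : Convex ℝ D)
    {f f' : ℝ → ℝ} (hf : ∀ t ∈ D, HasDerivWithinAt f (f' t) D t) (hf' : ∀ t ∈ D, 0 ≤ f' t) :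
    MonotoneOn f D :=
  monotoneOn_of_hasDerivWithinAt_nonneg hD (fun t ht => (hf t ht).continuousWithinAt)
    (fun t ht => (hf t (interior_subset ht)).mono interior_subset)
    (fun t ht => hf' t (interior_subset ht))

theorem antitoneOn_of_forall_hasDerivWithinAt_nonpos {D : Set ℝ} (hD : Convex ℝ D)
    {f f' : ℝ → ℝ} (hf : ∀ t ∈ D, HasDerivWithinAt f (f' t) D t) (hf' : ∀ t ∈ D, f' t ≤ 0) :
    AntitoneOn f D :=
  antitoneOn_of_hasDerivWithinAt_nonpos hD (fun t ht => (hf t ht).continuousWithinAt)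
    (fun t ht => (hf t (interior_subset ht)).mono interior_subset)
    (fun t ht => hf' t (interior_subset ht))

theorem MonotoneOn.le_of_tendsto_nhdsLT {f : ℝ → ℝ} {c b l : ℝ} (hf : MonotoneOn f (Ico c b))
    (hlim : Tendsto f (𝓝[<] b) (𝓝 l)) {x : ℝ} (hx : x ∈ Ico c b) : f x ≤ l :=
  ge_of_tendsto hlim <| by
    filter_upwards [Ioo_mem_nhdsLT hx.2] with t ht
    exact hf hx ⟨hx.1.trans ht.1.le, ht.2⟩ ht.1.le

theorem AntitoneOn.not_tendsto_nhdsLT_atTop {φ : ℝ → ℝ} {c b : ℝ} (hφ : AntitoneOn φ (Ico c b))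
    (hcb : c < b) : ¬Tendsto φ (𝓝[<] b) atTop := fun hlim => by
  obtain ⟨t, hφt, ht⟩ :=
    ((hlim.eventually_gt_atTop (φ c)).and (Ioo_mem_nhdsLT hcb)).exists
  exact (hφ ⟨le_rfl, hcb⟩ ⟨ht.1.le, ht.2⟩ ht.1.le).not_gt hφt

theorem deriv_nonpos_of_monotoneOn_of_tendsto_zero {f f' : ℝ → ℝ} {c b : ℝ}
    (hf : ∀ t ∈ Ico c b, HasDerivWithinAt f (f' t) (Ico c b) t) (hf' : MonotoneOn f' (Ico c b))
    (hpos : ∀ t ∈ Ico c b, 0 < f t) (hlim : Tendsto f (𝓝[<] b) (𝓝 0)) :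
    ∀ x ∈ Ico c b, f' x ≤ 0 := by
  intro x hx
  by_contra! hx'
  have hsub : Ico x b ⊆ Ico c b := Ico_subset_Ico_left hx.1
  have hmono : MonotoneOn f (Ico x b) :=
    monotoneOn_of_forall_hasDerivWithinAt_nonneg (convex_Ico x b)
      (fun t ht => (hf t (hsub ht)).mono hsub)
      (fun t ht => hx'.le.trans (hf' hx (hsub ht) ht.1))
  exact (hpos x hx).not_ge (hmono.le_of_tendsto_nhdsLT hlim ⟨le_rfl, hx.2⟩)

/-- The energy of `f'' = h + C / (4 f)`, a first integral of that equation. -/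
noncomputable def sundmanEnergy (C h : ℝ) (f f' : ℝ → ℝ) (t : ℝ) : ℝ :=
  f' t ^ 2 / 2 - C / 4 * log (f t) - h * f t

section SundmanEnergy

variable {C h : ℝ} {f f' f'' : ℝ → ℝ}

theorem hasDerivWithinAt_sundmanEnergy {s : Set ℝ} {t : ℝ}
    (hf : HasDerivWithinAt f (f' t) s t) (hf' : HasDerivWithinAt f' (f'' t) s t)
    (hft : f t ≠ 0) :
    HasDerivWithinAt (sundmanEnergy C h f f') (f' t * (f'' t - h - C / (4 * f t))) s t := by
  have hderiv : HasDerivWithinAt (sundmanEnergy C h f f')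
      (2 * f' t ^ (2 - 1) * f'' t / 2 - C / 4 * (f' t / f t) - h * f' t) s t :=
    (((hf'.fun_pow 2).div_const 2).sub ((hf.log hft).const_mul (C / 4))).sub (hf.const_mul h)
  refine hderiv.congr_deriv ?_
  field_simp
  ring

theorem antitoneOn_sundmanEnergy {D : Set ℝ} (hD : Convex ℝ D)
    (hf : ∀ t ∈ D, HasDerivWithinAt f (f' t) D t)
    (hf' : ∀ t ∈ D, HasDerivWithinAt f' (f'' t) D t) (hpos : ∀ t ∈ D, 0 < f t)
    (hf'_nonpos : ∀ t ∈ D, f' t ≤ 0) (hineq : ∀ t ∈ D, C ≤ 4 * f t * (f'' t - h)) :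
    AntitoneOn (sundmanEnergy C h f f') D := by
  refine antitoneOn_of_forall_hasDerivWithinAt_nonpos hD
    (fun t ht => hasDerivWithinAt_sundmanEnergy (hf t ht) (hf' t ht) (hpos t ht).ne')
    (fun t ht => mul_nonpos_of_nonpos_of_nonneg (hf'_nonpos t ht) ?_)
  rw [sub_nonneg, div_le_iff₀ (by linarith [hpos t ht])]
  linarith [hineq t ht]

theorem tendsto_sundmanEnergy_atTop {l : Filter ℝ} (hC : 0 < C)
    (hf : Tendsto f l (𝓝[>] 0)) : Tendsto (sundmanEnergy C h f f') l atTop := by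
  have hlog : Tendsto (fun t => -(C / 4 * log (f t))) l atTop :=
    tendsto_neg_atBot_atTop.comp
      ((tendsto_log_nhdsGT_zero.comp hf).const_mul_atBot (by positivity))
  have hlin : Tendsto (fun t => -(h * f t)) l (𝓝 0) := by
    simpa using ((hf.mono_right nhdsWithin_le_nhds).const_mul h).neg
  refine tendsto_atTop_mono (fun t => ?_) (hlog.atTop_add hlin)
  have := sq_nonneg (f' t)
  simp only [sundmanEnergy]
  linarith

end SundmanEnergy

/-- If `f : [a, b) → ℝ` is twice differentiable, positive, `f(t) → 0` and
`f''(t) → +∞` as `t → b⁻`, and `0 ≤ C ≤ 4 f(t) (f''(t) - h)` on `[a, b)` for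
some constant `h`, then `C = 0`. -/
theorem const_eq_zero_of_sundman_bound (a b : ℝ) (hab : a < b)
    (f f' f'' : ℝ → ℝ)
    (hf' : ∀ t ∈ Set.Ico a b, HasDerivWithinAt f (f' t) (Set.Ico a b) t)
    (hf'' : ∀ t ∈ Set.Ico a b, HasDerivWithinAt f' (f'' t) (Set.Ico a b) t)
    (hfpos : ∀ t ∈ Set.Ico a b, 0 < f t)
    (hf0 : Filter.Tendsto f (nhdsWithin b (Set.Iio b)) (nhds 0))
    (hf''top : Filter.Tendsto f'' (nhdsWithin b (Set.Iio b)) Filter.atTop)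
    (C h : ℝ) (hC : 0 ≤ C)
    (hineq : ∀ t ∈ Set.Ico a b, C ≤ 4 * f t * (f'' t - h)) :
    C = 0 := by
  by_contra hC0
  obtain ⟨l, hlb, hl⟩ := mem_nhdsLT_iff_exists_Ico_subset.mp (hf''top.eventually_ge_atTop 0)
  set c := max a l
  have hcb : c < b := max_lt hab hlb
  have hsub : Ico c b ⊆ Ico a b := Ico_subset_Ico_left (le_max_left a l)
  have hf'_c t (ht : t ∈ Ico c b) := (hf' t (hsub ht)).mono hsub
  have hf''_c t (ht : t ∈ Ico c b) := (hf'' t (hsub ht)).mono hsub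
  have hpos_c t (ht : t ∈ Ico c b) := hfpos t (hsub ht)
  have hf'_mono : MonotoneOn f' (Ico c b) :=
    monotoneOn_of_forall_hasDerivWithinAt_nonneg (convex_Ico c b) hf''_c
      (fun t ht => hl (Ico_subset_Ico_left (le_max_right a l) ht))
  have hanti := antitoneOn_sundmanEnergy (convex_Ico c b) hf'_c hf''_c hpos_c
    (deriv_nonpos_of_monotoneOn_of_tendsto_zero hf'_c hf'_mono hpos_c hf0)
    (fun t ht => hineq t (hsub ht))
  have hf0_pos : Tendsto f (𝓝[<] b) (𝓝[>] 0) :=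
    tendsto_nhdsWithin_of_tendsto_nhds_of_eventually_within _ hf0 <| by
      filter_upwards [Ioo_mem_nhdsLT hab] with t ht using hfpos t ⟨ht.1.le, ht.2⟩
  exact hanti.not_tendsto_nhdsLT_atTop hcb
    (tendsto_sundmanEnergy_atTop (hC.lt_of_ne' hC0) hf0_pos)
end
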